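/- arXiv:1307.0769 — 6 statements merged into one kernel-verified Lean document; each statement's English description precedes it below -/
import Mathlib

section
/- Under the stated assumptions, the algebra B is non-degenerate: for x ∈ B, if xB = 0 then x = 0, and if Bx = 0 then x = 0. -/
open scoped TensorProduct

noncomputable section

/-- A multiplier of a non-unital complex algebra `A`: a pair `T = (L, R)` of ℂ-linear maps
`A → A` satisfying `L (a*b) = L a * b`, `R (a*b) = a * R b` and `R a * b = a * L b`.
We write `T a := L a` and `a T := R a`. -/
structure Mult (A : Type*) [NonUnitalRing A] [Module ℂ A]
    [SMulCommClass ℂ A A] [IsScalarTower ℂ A A] where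
  L : A →ₗ[ℂ] A
  R : A →ₗ[ℂ] A
  hL : ∀ a b : A, L (a * b) = L a * b
  hR : ∀ a b : A, R (a * b) = a * R b
  hC : ∀ a b : A, R a * b = a * L b

namespace Mult

variable {A : Type*} [NonUnitalRing A] [Module ℂ A] [SMulCommClass ℂ A A] [IsScalarTower ℂ A A]

/-- Multiplication of multipliers: `(L,R)·(L′,R′) = (L∘L′, R′∘R)`. -/
instance : Mul (Mult A) :=
  ⟨fun T U =>
    { L := T.L ∘ₗ U.L
      R := U.R ∘ₗ T.R
      hL := fun a b => by simp [U.hL, T.hL]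
      hR := fun a b => by simp [T.hR, U.hR]
      hC := fun a b => by simp [U.hC, T.hC] }⟩

instance : Add (Mult A) :=
  ⟨fun T U =>
    { L := T.L + U.L
      R := T.R + U.R
      hL := fun a b => by simp [T.hL, U.hL, add_mul]
      hR := fun a b => by simp [T.hR, U.hR, mul_add]
      hC := fun a b => by simp [T.hC, U.hC, add_mul, mul_add] }⟩

instance : SMul ℂ (Mult A) :=
  ⟨fun c T =>
    { L := c • T.L
      R := c • T.R
      hL := fun a b => by simp [T.hL, smul_mul_assoc]
      hR := fun a b => by simp [T.hR, mul_smul_comm]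
      hC := fun a b => by simp [T.hC, smul_mul_assoc, mul_smul_comm] }⟩

end Mult

section Maps

variable {A : Type*} [NonUnitalRing A] [Module ℂ A] [SMulCommClass ℂ A A] [IsScalarTower ℂ A A]

/-- `w ↦ w · (c ⊗ 1)` on `A ⊗ A`. -/
def rmul₁ (c : A) : A ⊗[ℂ] A →ₗ[ℂ] A ⊗[ℂ] A :=
  TensorProduct.map (LinearMap.mulRight ℂ c) LinearMap.id

/-- `w ↦ w · (1 ⊗ c)` on `A ⊗ A`. -/
def rmul₂ (c : A) : A ⊗[ℂ] A →ₗ[ℂ] A ⊗[ℂ] A :=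
  TensorProduct.map LinearMap.id (LinearMap.mulRight ℂ c)

/-- `w ↦ (c ⊗ 1) · w` on `A ⊗ A`. -/
def lmul₁ (c : A) : A ⊗[ℂ] A →ₗ[ℂ] A ⊗[ℂ] A :=
  TensorProduct.map (LinearMap.mulLeft ℂ c) LinearMap.id

/-- `w ↦ (1 ⊗ c) · w` on `A ⊗ A`. -/
def lmul₂ (c : A) : A ⊗[ℂ] A →ₗ[ℂ] A ⊗[ℂ] A :=
  TensorProduct.map LinearMap.id (LinearMap.mulLeft ℂ c)

/-- `b ↦ a ⊗ b`. -/
def tmulL (a : A) : A →ₗ[ℂ] A ⊗[ℂ] A := TensorProduct.mk ℂ A A a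

/-- `a ↦ a ⊗ b`. -/
def tmulR (b : A) : A →ₗ[ℂ] A ⊗[ℂ] A := (TensorProduct.mk ℂ A A).flip b

/-- `(x ⊗ y) ⊗ v ↦ x ⊗ (y * v)`. -/
def mulIn23 : (A ⊗[ℂ] A) ⊗[ℂ] A →ₗ[ℂ] A ⊗[ℂ] A :=
  TensorProduct.map LinearMap.id (LinearMap.mul' ℂ A) ∘ₗ
    (TensorProduct.assoc ℂ A A A).toLinearMap

/-- `(x ⊗ y) ⊗ v ↦ x ⊗ (v * y)`. -/
def mulIn23' : (A ⊗[ℂ] A) ⊗[ℂ] A →ₗ[ℂ] A ⊗[ℂ] A :=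
  TensorProduct.map LinearMap.id
      (LinearMap.mul' ℂ A ∘ₗ (TensorProduct.comm ℂ A A).toLinearMap) ∘ₗ
    (TensorProduct.assoc ℂ A A A).toLinearMap

/-- `u ⊗ (x ⊗ y) ↦ (x * u) ⊗ y`. -/
def mulIn1 : A ⊗[ℂ] (A ⊗[ℂ] A) →ₗ[ℂ] A ⊗[ℂ] A :=
  TensorProduct.map (LinearMap.mul' ℂ A) LinearMap.id ∘ₗ
    (TensorProduct.assoc ℂ A A A).symm.toLinearMap ∘ₗ
    (TensorProduct.leftComm ℂ A A A).toLinearMap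

/-- `u ⊗ (x ⊗ y) ↦ (u * x) ⊗ y`. -/
def mulIn1' : A ⊗[ℂ] (A ⊗[ℂ] A) →ₗ[ℂ] A ⊗[ℂ] A :=
  TensorProduct.map (LinearMap.mul' ℂ A ∘ₗ (TensorProduct.comm ℂ A A).toLinearMap)
      LinearMap.id ∘ₗ
    (TensorProduct.assoc ℂ A A A).symm.toLinearMap ∘ₗ
    (TensorProduct.leftComm ℂ A A A).toLinearMap

end Maps

/-- The basic data for a left multiplier bialgebroid: non-unital complex algebras `A`, `B`,
an algebra homomorphism `s : B → M(A)`, an algebra anti-homomorphism `t : B → M(A)` with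
commuting images; `A` is idempotent and non-degenerate, `s`, `t` are faithful and the spans
of `s(B)A` and `t(B)A` equal `A`. -/
structure BaseData (A B : Type*) [NonUnitalRing A] [Module ℂ A] [SMulCommClass ℂ A A]
    [IsScalarTower ℂ A A] [NonUnitalRing B] [Module ℂ B] [SMulCommClass ℂ B B]
    [IsScalarTower ℂ B B] where
  s : B → Mult A
  t : B → Mult A
  s_add : ∀ x y : B, s (x + y) = s x + s y
  s_smul : ∀ (c : ℂ) (x : B), s (c • x) = c • s x
  s_mul : ∀ x y : B, s (x * y) = s x * s y
  t_add : ∀ x y : B, t (x + y) = t x + t y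
  t_smul : ∀ (c : ℂ) (x : B), t (c • x) = c • t x
  t_mul : ∀ x y : B, t (x * y) = t y * t x
  st_comm : ∀ x y : B, s x * t y = t y * s x
  A_nd : ∀ a : A, (∀ b : A, a * b = 0) → a = 0
  A_idem : Submodule.span ℂ {z : A | ∃ a b : A, z = a * b} = ⊤
  s_faithful : ∀ x : B, (∀ a : A, (s x).L a = 0) → x = 0
  t_faithful : ∀ x : B, (∀ a : A, (t x).L a = 0) → x = 0
  s_span : Submodule.span ℂ {z : A | ∃ (x : B) (a : A), z = (s x).L a} = ⊤
  t_span : Submodule.span ℂ {z : A | ∃ (x : B) (a : A), z = (t x).L a} = ⊤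

section LeftBgd

variable {A B : Type*}
  [NonUnitalRing A] [Module ℂ A] [SMulCommClass ℂ A A] [IsScalarTower ℂ A A]
  [NonUnitalRing B] [Module ℂ B] [SMulCommClass ℂ B B] [IsScalarTower ℂ B B]

/-- The subspace of `A ⊗ A` by which one quotients to obtain `A ⊗̄ A`:
the span of all `s(x)a ⊗ b − a ⊗ t(x)b`. -/
def BaseData.relB (D : BaseData A B) : Submodule ℂ (A ⊗[ℂ] A) :=
  Submodule.span ℂ
    {z : A ⊗[ℂ] A | ∃ (x : B) (a b : A), z = (D.s x).L a ⊗ₜ[ℂ] b - a ⊗ₜ[ℂ] (D.t x).L b}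

/-- Non-degeneracy of `A ⊗̄ A` as a right module over `A ⊗ 1` and over `1 ⊗ A`,
formulated via representatives. -/
def condA3 (D : BaseData A B) : Prop :=
  (∀ u : A ⊗[ℂ] A, (∀ c : A, rmul₁ c u ∈ D.relB) → u ∈ D.relB) ∧
  (∀ u : A ⊗[ℂ] A, (∀ c : A, rmul₂ c u ∈ D.relB) → u ∈ D.relB)

/-- (L1): `T̃λ(s(x)a⊗b) = T̃λ(a⊗b)(1⊗t(x))` and `T̃ρ(a⊗t(y)b) = T̃ρ(a⊗b)(s(y)⊗1)`. -/
def condL1 (D : BaseData A B) (Tl Tr : A ⊗[ℂ] A →ₗ[ℂ] A ⊗[ℂ] A) : Prop :=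
  (∀ (x : B) (a b : A),
      Tl ((D.s x).L a ⊗ₜ[ℂ] b) -
        TensorProduct.map LinearMap.id (D.t x).R (Tl (a ⊗ₜ[ℂ] b)) ∈ D.relB) ∧
  (∀ (y : B) (a b : A),
      Tr (a ⊗ₜ[ℂ] (D.t y).L b) -
        TensorProduct.map (D.s y).R LinearMap.id (Tr (a ⊗ₜ[ℂ] b)) ∈ D.relB)

/-- (L2λ): `T̃λ(a ⊗ s(x)t(y)b s(x′)t(y′)) = (t(y)⊗s(x))·T̃λ(t(y′)a⊗b)·(1⊗s(x′))`. -/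
def condL2lam (D : BaseData A B) (Tl : A ⊗[ℂ] A →ₗ[ℂ] A ⊗[ℂ] A) : Prop :=
  ∀ (a b : A) (x x' y y' : B),
    Tl (a ⊗ₜ[ℂ] ((D.s x).L ((D.t y).L ((D.t y').R ((D.s x').R b))))) -
      TensorProduct.map (D.t y).L (D.s x).L
        (TensorProduct.map LinearMap.id (D.s x').R (Tl ((D.t y').L a ⊗ₜ[ℂ] b))) ∈ D.relB

/-- (L2ρ): `T̃ρ(s(x)t(y)a s(x′)t(y′) ⊗ b) = (t(y)⊗s(x))·T̃ρ(a⊗s(x′)b)·(t(y′)⊗1)`. -/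
def condL2rho (D : BaseData A B) (Tr : A ⊗[ℂ] A →ₗ[ℂ] A ⊗[ℂ] A) : Prop :=
  ∀ (a b : A) (x x' y y' : B),
    Tr (((D.s x).L ((D.t y).L ((D.t y').R ((D.s x').R a)))) ⊗ₜ[ℂ] b) -
      TensorProduct.map (D.t y).L (D.s x).L
        (TensorProduct.map (D.t y').R LinearMap.id (Tr (a ⊗ₜ[ℂ] (D.s x').L b))) ∈ D.relB

/-- (L3): `T̃λ(a⊗b)·(1⊗c) = T̃ρ(b⊗c)·(a⊗1)`. -/
def condL3 (D : BaseData A B) (Tl Tr : A ⊗[ℂ] A →ₗ[ℂ] A ⊗[ℂ] A) : Prop :=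
  ∀ a b c : A, rmul₂ c (Tl (a ⊗ₜ[ℂ] b)) - rmul₁ a (Tr (b ⊗ₜ[ℂ] c)) ∈ D.relB

/-- (L4): `T̃λ(ba⊗c) = T̃λ(b⊗c)·(a⊗1)` and `T̃ρ(a⊗bc) = T̃ρ(a⊗b)·(1⊗c)`. -/
def condL4 (D : BaseData A B) (Tl Tr : A ⊗[ℂ] A →ₗ[ℂ] A ⊗[ℂ] A) : Prop :=
  (∀ a b c : A, Tl ((b * a) ⊗ₜ[ℂ] c) - rmul₁ a (Tl (b ⊗ₜ[ℂ] c)) ∈ D.relB) ∧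
  (∀ a b c : A, Tr (a ⊗ₜ[ℂ] (b * c)) - rmul₂ c (Tr (a ⊗ₜ[ℂ] b)) ∈ D.relB)

/-- (L5λ): whenever `u = Σⱼ uⱼ⊗vⱼ` represents `T̃λ(a⊗c)`, one has
`T̃λ(a ⊗ bc) = Σⱼ T̃λ(uⱼ⊗b)·(1⊗vⱼ)`. -/
def condL5lam (D : BaseData A B) (Tl : A ⊗[ℂ] A →ₗ[ℂ] A ⊗[ℂ] A) : Prop :=
  ∀ (a b c : A) (u : A ⊗[ℂ] A), u - Tl (a ⊗ₜ[ℂ] c) ∈ D.relB →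
    Tl (a ⊗ₜ[ℂ] (b * c)) -
      mulIn23 (TensorProduct.map (Tl ∘ₗ tmulR b) LinearMap.id u) ∈ D.relB

/-- (L5ρ): whenever `u = Σⱼ uⱼ⊗vⱼ` represents `T̃ρ(b⊗c)`, one has
`T̃ρ(ab ⊗ c) = Σⱼ T̃ρ(a⊗vⱼ)·(uⱼ⊗1)`. -/
def condL5rho (D : BaseData A B) (Tr : A ⊗[ℂ] A →ₗ[ℂ] A ⊗[ℂ] A) : Prop :=
  ∀ (a b c : A) (u : A ⊗[ℂ] A), u - Tr (b ⊗ₜ[ℂ] c) ∈ D.relB →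
    Tr ((a * b) ⊗ₜ[ℂ] c) -
      mulIn1 (TensorProduct.map LinearMap.id (Tr ∘ₗ tmulL a) u) ∈ D.relB

/-- The subspace of `A ⊗ A ⊗ A` by which one quotients to obtain the two-sided balanced
triple tensor product: the span of all `s(x)a⊗b⊗c − a⊗t(x)b⊗c` and
`a⊗s(x)b⊗c − a⊗b⊗t(x)c`. -/
def BaseData.span₃ (D : BaseData A B) : Submodule ℂ (A ⊗[ℂ] (A ⊗[ℂ] A)) :=
  Submodule.span ℂ
    ({w : A ⊗[ℂ] (A ⊗[ℂ] A) | ∃ (x : B) (a b c : A),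
        w = (D.s x).L a ⊗ₜ[ℂ] (b ⊗ₜ[ℂ] c) - a ⊗ₜ[ℂ] ((D.t x).L b ⊗ₜ[ℂ] c)} ∪
     {w : A ⊗[ℂ] (A ⊗[ℂ] A) | ∃ (x : B) (a b c : A),
        w = a ⊗ₜ[ℂ] ((D.s x).L b ⊗ₜ[ℂ] c) - a ⊗ₜ[ℂ] (b ⊗ₜ[ℂ] (D.t x).L c)})

/-- (L6): mixed coassociativity; whenever `u` represents `T̃ρ(b⊗c)` and `p` represents
`T̃λ(a⊗b)`, the elements `Σⱼ T̃λ(a⊗uⱼ)⊗vⱼ` and `Σₖ pₖ⊗T̃ρ(qₖ⊗c)` agree in the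
balanced triple tensor product. -/
def condL6 (D : BaseData A B) (Tl Tr : A ⊗[ℂ] A →ₗ[ℂ] A ⊗[ℂ] A) : Prop :=
  ∀ (a b c : A) (u p : A ⊗[ℂ] A), u - Tr (b ⊗ₜ[ℂ] c) ∈ D.relB →
    p - Tl (a ⊗ₜ[ℂ] b) ∈ D.relB →
    (TensorProduct.assoc ℂ A A A)
        (TensorProduct.map (Tl ∘ₗ tmulL a) LinearMap.id u) -
      TensorProduct.map LinearMap.id (Tr ∘ₗ tmulR c) p ∈ D.span₃

/-- A left multiplier bialgebroid, presented by its canonical maps. -/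
def IsLeftBialgebroid (D : BaseData A B) (Tl Tr : A ⊗[ℂ] A →ₗ[ℂ] A ⊗[ℂ] A) : Prop :=
  condA3 D ∧ condL1 D Tl Tr ∧ condL2lam D Tl ∧ condL2rho D Tr ∧ condL3 D Tl Tr ∧
    condL4 D Tl Tr ∧ condL5lam D Tl ∧ condL5rho D Tr ∧ condL6 D Tl Tr

/-- A left counit for a left multiplier bialgebroid. -/
def IsLeftCounit (D : BaseData A B) (Tl Tr : A ⊗[ℂ] A →ₗ[ℂ] A ⊗[ℂ] A)
    (ε : A →ₗ[ℂ] B) : Prop :=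
  (∀ (x : B) (a : A), ε ((D.s x).L a) = x * ε a) ∧
  (∀ (y : B) (a : A), ε ((D.t y).L a) = ε a * y) ∧
  (∀ (a b : A) (n : ℕ) (uu vv : Fin n → A),
      (∑ j, uu j ⊗ₜ[ℂ] vv j) - Tr (a ⊗ₜ[ℂ] b) ∈ D.relB →
      ∑ j, (D.t (ε (uu j))).L (vv j) = a * b) ∧
  (∀ (a b : A) (n : ℕ) (uu vv : Fin n → A),
      (∑ j, uu j ⊗ₜ[ℂ] vv j) - Tl (a ⊗ₜ[ℂ] b) ∈ D.relB →
      ∑ j, (D.s (ε (vv j))).L (uu j) = a * b)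

/-- The domain relation for the canonical map `Tλ`: the span of all
`t(x)a ⊗ b − a ⊗ b·t(x)`. -/
def relLam (D : BaseData A B) : Submodule ℂ (A ⊗[ℂ] A) :=
  Submodule.span ℂ
    {z : A ⊗[ℂ] A | ∃ (x : B) (a b : A), z = (D.t x).L a ⊗ₜ[ℂ] b - a ⊗ₜ[ℂ] (D.t x).R b}

/-- The domain relation for the canonical map `Tρ`: the span of all
`a·s(x) ⊗ b − a ⊗ s(x)b`. -/
def relRho (D : BaseData A B) : Submodule ℂ (A ⊗[ℂ] A) :=
  Submodule.span ℂ
    {z : A ⊗[ℂ] A | ∃ (x : B) (a b : A), z = (D.s x).R a ⊗ₜ[ℂ] b - a ⊗ₜ[ℂ] (D.s x).L b}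

/-- The left ideal `Iˢ ⊆ B`. -/
def IdlS (D : BaseData A B) : Submodule ℂ B :=
  Submodule.span ℂ
    {z : B | ∃ φ : A →ₗ[ℂ] B, (∀ (x : B) (a : A), φ ((D.s x).L a) = x * φ a) ∧ ∃ a, z = φ a}

/-- The right ideal `Iᵗ ⊆ B`. -/
def IdlT (D : BaseData A B) : Submodule ℂ B :=
  Submodule.span ℂ
    {z : B | ∃ ψ : A →ₗ[ℂ] B, (∀ (x : B) (a : A), ψ ((D.t x).L a) = ψ a * x) ∧ ∃ a, z = ψ a}

/-- The elements witnessing left-fullness. -/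
def leftFullSet (D : BaseData A B) (Tr : A ⊗[ℂ] A →ₗ[ℂ] A ⊗[ℂ] A) : Set A :=
  {z : A | ∃ ψ : A →ₗ[ℂ] B, (∀ (x : B) (a : A), ψ ((D.t x).L a) = ψ a * x) ∧
    ∃ (a b : A) (n : ℕ) (uu vv : Fin n → A),
      (∑ j, uu j ⊗ₜ[ℂ] vv j) - Tr (a ⊗ₜ[ℂ] b) ∈ D.relB ∧
      z = ∑ j, (D.s (ψ (vv j))).L (uu j)}

/-- The elements witnessing right-fullness. -/
def rightFullSet (D : BaseData A B) (Tl : A ⊗[ℂ] A →ₗ[ℂ] A ⊗[ℂ] A) : Set A :=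
  {z : A | ∃ φ : A →ₗ[ℂ] B, (∀ (x : B) (a : A), φ ((D.s x).L a) = x * φ a) ∧
    ∃ (a b : A) (n : ℕ) (uu vv : Fin n → A),
      (∑ j, uu j ⊗ₜ[ℂ] vv j) - Tl (a ⊗ₜ[ℂ] b) ∈ D.relB ∧
      z = ∑ j, (D.t (φ (uu j))).L (vv j)}

namespace BaseData

theorem s_zero_L (D : BaseData A B) : (D.s 0).L = 0 := by
  have h := congrArg Mult.L (D.s_smul 0 0)
  rw [zero_smul] at h
  exact h.trans (zero_smul ℂ _)

theorem t_zero_L (D : BaseData A B) : (D.t 0).L = 0 := by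
  have h := congrArg Mult.L (D.t_smul 0 0)
  rw [zero_smul] at h
  exact h.trans (zero_smul ℂ _)

theorem s_mul_L (D : BaseData A B) (x y : B) (a : A) :
    (D.s (x * y)).L a = (D.s x).L ((D.s y).L a) := by
  rw [D.s_mul]; rfl

theorem t_mul_L (D : BaseData A B) (x y : B) (a : A) :
    (D.t (x * y)).L a = (D.t y).L ((D.t x).L a) := by
  rw [D.t_mul]; rfl

theorem eq_zero_of_mul_right_eq_zero (D : BaseData A B) {x : B} (hx : ∀ y : B, x * y = 0) :
    x = 0 := by
  have hL : (D.s x).L = 0 := LinearMap.ext_on D.s_span <| by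
    rintro _ ⟨y, a, rfl⟩
    rw [← s_mul_L, hx, s_zero_L, LinearMap.zero_apply, LinearMap.zero_apply]
  exact D.s_faithful x fun a => by rw [hL, LinearMap.zero_apply]

theorem eq_zero_of_mul_left_eq_zero (D : BaseData A B) {x : B} (hx : ∀ y : B, y * x = 0) :
    x = 0 := by
  have hL : (D.t x).L = 0 := LinearMap.ext_on D.t_span <| by
    rintro _ ⟨y, a, rfl⟩
    rw [← t_mul_L, hx, t_zero_L, LinearMap.zero_apply, LinearMap.zero_apply]
  exact D.t_faithful x fun a => by rw [hL, LinearMap.zero_apply]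

end BaseData

/-- the algebra `B` is non-degenerate. -/
theorem stmt0 (D : BaseData A B) :
    ∀ x : B, ((∀ y : B, x * y = 0) → x = 0) ∧ ((∀ y : B, y * x = 0) → x = 0) :=
  fun _ => ⟨D.eq_zero_of_mul_right_eq_zero, D.eq_zero_of_mul_left_eq_zero⟩

end LeftBgd
end
end

section
/- If A has right local units, i.e. for every finite subset F ⊆ A there exists e ∈ A with ae = a for all a ∈ F, then A⊗̄A is non-degenerate as a right module over A⊗1 and over 1⊗A: an element w ∈ A⊗̄A with w·(c⊗1) = 0 for all c ∈ A is zero, and an element w ∈ A⊗̄A with w·(1⊗c) = 0 for all c ∈ A is zero. -/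
open scoped TensorProduct

noncomputable section

section LocalUnits

variable {A : Type*} [NonUnitalRing A] [Module ℂ A] [IsScalarTower ℂ A A]

theorem exists_rmul₁_eq_self (hlu : ∀ F : Finset A, ∃ e : A, ∀ a ∈ F, a * e = a)
    (u : A ⊗[ℂ] A) : ∃ e : A, rmul₁ e u = u := by
  classical
  obtain ⟨S, rfl⟩ := TensorProduct.exists_finset u
  obtain ⟨e, he⟩ := hlu (S.image Prod.fst)
  refine ⟨e, ?_⟩
  simp only [rmul₁, map_sum, TensorProduct.map_tmul, LinearMap.mulRight_apply, LinearMap.id_apply]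
  exact Finset.sum_congr rfl fun p hp => by rw [he p.1 (Finset.mem_image_of_mem _ hp)]

theorem exists_rmul₂_eq_self (hlu : ∀ F : Finset A, ∃ e : A, ∀ a ∈ F, a * e = a)
    (u : A ⊗[ℂ] A) : ∃ e : A, rmul₂ e u = u := by
  classical
  obtain ⟨S, rfl⟩ := TensorProduct.exists_finset u
  obtain ⟨e, he⟩ := hlu (S.image Prod.snd)
  refine ⟨e, ?_⟩
  simp only [rmul₂, map_sum, TensorProduct.map_tmul, LinearMap.mulRight_apply, LinearMap.id_apply]
  exact Finset.sum_congr rfl fun p hp => by rw [he p.2 (Finset.mem_image_of_mem _ hp)]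

end LocalUnits

section LeftBgd

variable {A B : Type*}
  [NonUnitalRing A] [Module ℂ A] [SMulCommClass ℂ A A] [IsScalarTower ℂ A A]
  [NonUnitalRing B] [Module ℂ B] [SMulCommClass ℂ B B] [IsScalarTower ℂ B B]

/-- if `A` has right local units, then `A ⊗̄ A` is non-degenerate as a right
module over `A ⊗ 1` and over `1 ⊗ A`. -/
theorem stmt1 (D : BaseData A B)
    (hlu : ∀ F : Finset A, ∃ e : A, ∀ a ∈ F, a * e = a) :
    (∀ u : A ⊗[ℂ] A, (∀ c : A, rmul₁ c u ∈ D.relB) → u ∈ D.relB) ∧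
    (∀ u : A ⊗[ℂ] A, (∀ c : A, rmul₂ c u ∈ D.relB) → u ∈ D.relB) := by
  refine ⟨fun u hu => ?_, fun u hu => ?_⟩
  · obtain ⟨e, he⟩ := exists_rmul₁_eq_self hlu u
    exact he ▸ hu e
  · obtain ⟨e, he⟩ := exists_rmul₂_eq_self hlu u
    exact he ▸ hu e

end LeftBgd
end
end

section
/- Suppose that B is firm, i.e. the linear map (B⊗B)/span{xy⊗z−x⊗yz : x,y,z∈B} → B induced by multiplication is bijective, and that the following local projectivity conditions hold: for every finite subset F ⊆ A there exist finitely many linear maps υᵢ:A→B with υᵢ(s(x)a)=xυᵢ(a) (x∈B,a∈A) and eᵢ:B→A with eᵢ(xx′)=s(x)eᵢ(x′) (x,x′∈B) such that Σᵢ eᵢ(υᵢ(a))=a for all a∈F; and for every finite subset F ⊆ A there exist finitely many linear maps fⱼ:A→B with fⱼ(t(x)a)=fⱼ(a)x and ωⱼ:B→A with ωⱼ(x′x)=t(x)ωⱼ(x′) such that Σⱼ ωⱼ(fⱼ(a))=a for all a∈F. Then A⊗̄A is non-degenerate as a right module over A⊗1 and over 1⊗A: an element w ∈ A⊗̄A with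 w·(c⊗1) = 0 for all c ∈ A is zero, and an element w ∈ A⊗̄A with w·(1⊗c) = 0 for all c ∈ A is zero. -/
open scoped TensorProduct

noncomputable section

section LeftBgd

variable {A B : Type*}
  [NonUnitalRing A] [Module ℂ A] [SMulCommClass ℂ A A] [IsScalarTower ℂ A A]
  [NonUnitalRing B] [Module ℂ B] [SMulCommClass ℂ B B] [IsScalarTower ℂ B B]

/-!
Write `u = ∑ₚ aₚ ⊗ bₚ`. By local projectivity, `aₚ ⊗ bₚ = ∑ₖⱼ eₖ(υₖ aₚ) ⊗ ωⱼ(fⱼ bₚ)`.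
As `eₖ` is left and `ωⱼ` right `B`-linear, `y ⊗ z ↦ eₖ z ⊗ ωⱼ y` kills the balancing relations of `B ⊗ B`, so by firmness the class of `u` in `A ⊗̄ A` vanishes as soon
as every `∑ₚ fⱼ(bₚ) υₖ(aₚ) ∈ B` does. That element is `υₖ(ρⱼ u)` for `ρⱼ (a ⊗ b) = s(fⱼ b) a`,
which is well defined on `A ⊗̄ A` and satisfies `ρⱼ (u · (c ⊗ 1)) = ρⱼ(u) c`; hence it is `0`
when `u · (A ⊗ 1) = 0`, by non-degeneracy of `A`. Over `1 ⊗ A` one uses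
`a ⊗ b ↦ t(υₖ a) b` instead.
-/

lemma Mult.mul_L_apply (T U : Mult A) (a : A) : (T * U).L a = T.L (U.L a) := rfl

lemma TensorProduct.exists_finset_map_eq_self {R M N : Type*} [CommSemiring R]
    [AddCommMonoid M] [Module R M] [AddCommMonoid N] [Module R N] (u : M ⊗[R] N) :
    ∃ (F : Finset M) (G : Finset N), ∀ (P : M →ₗ[R] M) (Q : N →ₗ[R] N),
      (∀ a ∈ F, P a = a) → (∀ b ∈ G, Q b = b) → TensorProduct.map P Q u = u := by
  classical
  obtain ⟨S, rfl⟩ := TensorProduct.exists_finset u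
  refine ⟨S.image Prod.fst, S.image Prod.snd, fun P Q hP hQ => ?_⟩
  rw [map_sum]
  refine Finset.sum_congr rfl fun p hp => ?_
  rw [TensorProduct.map_tmul, hP _ (Finset.mem_image_of_mem _ hp),
    hQ _ (Finset.mem_image_of_mem _ hp)]

def balancingRel (B : Type*) [NonUnitalRing B] [Module ℂ B] : Submodule ℂ (B ⊗[ℂ] B) :=
  Submodule.span ℂ {z : B ⊗[ℂ] B | ∃ x y w : B, z = (x * y) ⊗ₜ[ℂ] w - x ⊗ₜ[ℂ] (y * w)}

namespace BaseData

variable (D : BaseData A B)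

def IsSLinear (φ : A →ₗ[ℂ] B) : Prop := ∀ (x : B) (a : A), φ ((D.s x).L a) = x * φ a

def IsTLinear (ψ : A →ₗ[ℂ] B) : Prop := ∀ (x : B) (a : A), ψ ((D.t x).L a) = ψ a * x

def LocallyProjectiveS : Prop :=
  ∀ F : Finset A, ∃ (n : ℕ) (υ : Fin n → (A →ₗ[ℂ] B)) (e : Fin n → (B →ₗ[ℂ] A)),
    (∀ i, D.IsSLinear (υ i)) ∧ (∀ (i : Fin n) (x x' : B), e i (x * x') = (D.s x).L (e i x')) ∧
    ∀ a ∈ F, ∑ i, e i (υ i a) = a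

def LocallyProjectiveT : Prop :=
  ∀ F : Finset A, ∃ (n : ℕ) (f : Fin n → (A →ₗ[ℂ] B)) (ω : Fin n → (B →ₗ[ℂ] A)),
    (∀ i, D.IsTLinear (f i)) ∧ (∀ (i : Fin n) (x x' : B), ω i (x' * x) = (D.t x).L (ω i x')) ∧
    ∀ a ∈ F, ∑ i, ω i (f i a) = a

def sL : B →ₗ[ℂ] A →ₗ[ℂ] A where
  toFun x := (D.s x).L
  map_add' x y := by rw [D.s_add]; rfl
  map_smul' c x := by rw [D.s_smul]; rfl

def tL : B →ₗ[ℂ] A →ₗ[ℂ] A where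
  toFun x := (D.t x).L
  map_add' x y := by rw [D.t_add]; rfl
  map_smul' c x := by rw [D.t_smul]; rfl

def contractRight (ψ : A →ₗ[ℂ] B) : A ⊗[ℂ] A →ₗ[ℂ] A :=
  TensorProduct.lift (D.sL ∘ₗ ψ).flip

def contractLeft (φ : A →ₗ[ℂ] B) : A ⊗[ℂ] A →ₗ[ℂ] A :=
  TensorProduct.lift (D.tL ∘ₗ φ)

@[simp]
lemma contractRight_tmul (ψ : A →ₗ[ℂ] B) (a b : A) :
    D.contractRight ψ (a ⊗ₜ[ℂ] b) = (D.s (ψ b)).L a := rfl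

@[simp]
lemma contractLeft_tmul (φ : A →ₗ[ℂ] B) (a b : A) :
    D.contractLeft φ (a ⊗ₜ[ℂ] b) = (D.t (φ a)).L b := rfl

variable {D}

lemma relB_le_ker_contractRight {ψ : A →ₗ[ℂ] B} (hψ : D.IsTLinear ψ) :
    D.relB ≤ LinearMap.ker (D.contractRight ψ) := by
  refine Submodule.span_le.mpr ?_
  rintro _ ⟨x, a, b, rfl⟩
  simp only [SetLike.mem_coe, LinearMap.mem_ker, map_sub, contractRight_tmul]
  rw [hψ, D.s_mul, Mult.mul_L_apply, sub_self]

lemma relB_le_ker_contractLeft {φ : A →ₗ[ℂ] B} (hφ : D.IsSLinear φ) :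
    D.relB ≤ LinearMap.ker (D.contractLeft φ) := by
  refine Submodule.span_le.mpr ?_
  rintro _ ⟨x, a, b, rfl⟩
  simp only [SetLike.mem_coe, LinearMap.mem_ker, map_sub, contractLeft_tmul]
  rw [hφ, D.t_mul, Mult.mul_L_apply, sub_self]

lemma contractRight_rmul₁ (ψ : A →ₗ[ℂ] B) (c : A) (u : A ⊗[ℂ] A) :
    D.contractRight ψ (rmul₁ c u) = D.contractRight ψ u * c := by
  induction u using TensorProduct.induction_on with
  | zero => simp
  | tmul a b => simp [rmul₁, (D.s (ψ b)).hL]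
  | add v w hv hw => simp [hv, hw, add_mul]

lemma contractLeft_rmul₂ (φ : A →ₗ[ℂ] B) (c : A) (u : A ⊗[ℂ] A) :
    D.contractLeft φ (rmul₂ c u) = D.contractLeft φ u * c := by
  induction u using TensorProduct.induction_on with
  | zero => simp
  | tmul a b => simp [rmul₂, (D.t (φ a)).hL]
  | add v w hv hw => simp [hv, hw, add_mul]

lemma contractRight_eq_zero {ψ : A →ₗ[ℂ] B} (hψ : D.IsTLinear ψ) {u : A ⊗[ℂ] A}
    (hu : ∀ c, rmul₁ c u ∈ D.relB) : D.contractRight ψ u = 0 :=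
  D.A_nd _ fun c => by rw [← contractRight_rmul₁]; exact relB_le_ker_contractRight hψ (hu c)

lemma contractLeft_eq_zero {φ : A →ₗ[ℂ] B} (hφ : D.IsSLinear φ) {u : A ⊗[ℂ] A}
    (hu : ∀ c, rmul₂ c u ∈ D.relB) : D.contractLeft φ u = 0 :=
  D.A_nd _ fun c => by rw [← contractLeft_rmul₂]; exact relB_le_ker_contractLeft hφ (hu c)

lemma mul'_map_comm_eq_apply_contractRight {φ : A →ₗ[ℂ] B} (hφ : D.IsSLinear φ)
    (ψ : A →ₗ[ℂ] B) (u : A ⊗[ℂ] A) :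
    LinearMap.mul' ℂ B (TensorProduct.map ψ φ (TensorProduct.comm ℂ A A u)) =
      φ (D.contractRight ψ u) := by
  induction u using TensorProduct.induction_on with
  | zero => simp
  | tmul a b => simp [hφ (ψ b) a]
  | add v w hv hw => simp only [map_add, hv, hw]

lemma mul'_map_comm_eq_apply_contractLeft (φ : A →ₗ[ℂ] B) {ψ : A →ₗ[ℂ] B}
    (hψ : D.IsTLinear ψ) (u : A ⊗[ℂ] A) :
    LinearMap.mul' ℂ B (TensorProduct.map ψ φ (TensorProduct.comm ℂ A A u)) =
      ψ (D.contractLeft φ u) := by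
  induction u using TensorProduct.induction_on with
  | zero => simp
  | tmul a b => simp [hψ (φ a) b]
  | add v w hv hw => simp only [map_add, hv, hw]

lemma map_comm_mem_relB {e ω : B →ₗ[ℂ] A} (he : ∀ x x' : B, e (x * x') = (D.s x).L (e x'))
    (hω : ∀ x x' : B, ω (x' * x) = (D.t x).L (ω x')) {v : B ⊗[ℂ] B}
    (hv : v ∈ balancingRel B) :
    TensorProduct.map e ω (TensorProduct.comm ℂ B B v) ∈ D.relB := by
  suffices balancingRel B ≤ D.relB.comap
      (TensorProduct.map e ω ∘ₗ (TensorProduct.comm ℂ B B).toLinearMap) from this hv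
  refine Submodule.span_le.mpr ?_
  rintro _ ⟨x, y, w, rfl⟩
  simp only [SetLike.mem_coe, Submodule.mem_comap, LinearMap.coe_comp, LinearEquiv.coe_coe,
    Function.comp_apply, map_sub, TensorProduct.comm_tmul, TensorProduct.map_tmul, he, hω]
  rw [← neg_sub]
  exact D.relB.neg_mem (Submodule.subset_span ⟨y, e w, ω x, rfl⟩)

lemma map_mem_relB_of_mul'_eq_zero (hfirm : LinearMap.ker (LinearMap.mul' ℂ B) ≤ balancingRel B)
    {φ ψ : A →ₗ[ℂ] B} {e ω : B →ₗ[ℂ] A} (he : ∀ x x' : B, e (x * x') = (D.s x).L (e x'))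
    (hω : ∀ x x' : B, ω (x' * x) = (D.t x).L (ω x')) {u : A ⊗[ℂ] A}
    (hu : LinearMap.mul' ℂ B (TensorProduct.map ψ φ (TensorProduct.comm ℂ A A u)) = 0) :
    TensorProduct.map (e ∘ₗ φ) (ω ∘ₗ ψ) u ∈ D.relB := by
  have h := map_comm_mem_relB (D := D) he hω (hfirm hu)
  rwa [← TensorProduct.map_comm, TensorProduct.comm_comm, TensorProduct.map_map] at h

lemma mem_relB_of_forall_mul'_eq_zero
    (hfirm : LinearMap.ker (LinearMap.mul' ℂ B) ≤ balancingRel B)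
    (hs : D.LocallyProjectiveS) (ht : D.LocallyProjectiveT) (u : A ⊗[ℂ] A)
    (h : ∀ φ ψ : A →ₗ[ℂ] B, D.IsSLinear φ → D.IsTLinear ψ →
      LinearMap.mul' ℂ B (TensorProduct.map ψ φ (TensorProduct.comm ℂ A A u)) = 0) :
    u ∈ D.relB := by
  obtain ⟨F, G, hFG⟩ := TensorProduct.exists_finset_map_eq_self u
  obtain ⟨n, υ, e, hυ, he, hυe⟩ := hs F
  obtain ⟨m, f, ω, hf, hω, hfω⟩ := ht G
  have hu : u = ∑ j, ∑ k, TensorProduct.map (e k ∘ₗ υ k) (ω j ∘ₗ f j) u :=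
    calc u = TensorProduct.map (∑ k, e k ∘ₗ υ k) (∑ j, ω j ∘ₗ f j) u :=
          (hFG _ _ (by simpa using hυe) (by simpa using hfω)).symm
      _ = _ := by
          simp only [← TensorProduct.mapBilinear_apply, map_sum, LinearMap.sum_apply]
  rw [hu]
  exact sum_mem fun j _ => sum_mem fun k _ =>
    map_mem_relB_of_mul'_eq_zero hfirm (he k) (hω j) (h _ _ (hυ k) (hf j))

end BaseData

theorem stmt2_general (D : BaseData A B)
    (hfirm_inj : ∀ u : B ⊗[ℂ] B, LinearMap.mul' ℂ B u = 0 →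
      u ∈ Submodule.span ℂ
        {z : B ⊗[ℂ] B | ∃ x y w : B, z = (x * y) ⊗ₜ[ℂ] w - x ⊗ₜ[ℂ] (y * w)})
    (hlp_s : ∀ F : Finset A, ∃ (n : ℕ) (υ : Fin n → (A →ₗ[ℂ] B)) (e : Fin n → (B →ₗ[ℂ] A)),
      (∀ (i : Fin n) (x : B) (a : A), υ i ((D.s x).L a) = x * υ i a) ∧
      (∀ (i : Fin n) (x x' : B), e i (x * x') = (D.s x).L (e i x')) ∧
      ∀ a ∈ F, ∑ i, e i (υ i a) = a)
    (hlp_t : ∀ F : Finset A, ∃ (n : ℕ) (f : Fin n → (A →ₗ[ℂ] B)) (ω : Fin n → (B →ₗ[ℂ] A)),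
      (∀ (i : Fin n) (x : B) (a : A), f i ((D.t x).L a) = f i a * x) ∧
      (∀ (i : Fin n) (x x' : B), ω i (x' * x) = (D.t x).L (ω i x')) ∧
      ∀ a ∈ F, ∑ i, ω i (f i a) = a) :
    (∀ u : A ⊗[ℂ] A, (∀ c : A, rmul₁ c u ∈ D.relB) → u ∈ D.relB) ∧
    (∀ u : A ⊗[ℂ] A, (∀ c : A, rmul₂ c u ∈ D.relB) → u ∈ D.relB) := by
  constructor
  · intro u hu
    refine D.mem_relB_of_forall_mul'_eq_zero hfirm_inj hlp_s hlp_t u fun φ ψ hφ hψ => ?_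
    rw [BaseData.mul'_map_comm_eq_apply_contractRight hφ,
      BaseData.contractRight_eq_zero hψ hu, map_zero]
  · intro u hu
    refine D.mem_relB_of_forall_mul'_eq_zero hfirm_inj hlp_s hlp_t u fun φ ψ hφ hψ => ?_
    rw [BaseData.mul'_map_comm_eq_apply_contractLeft φ hψ,
      BaseData.contractLeft_eq_zero hφ hu, map_zero]

/-- if `B` is firm and the `B`-modules `ₛA` and `Aₜ` are locally projective,
then `A ⊗̄ A` is non-degenerate over `A ⊗ 1` and over `1 ⊗ A`. -/
theorem stmt2 (D : BaseData A B)
    (hfirm_surj : Submodule.span ℂ {z : B | ∃ x y : B, z = x * y} = ⊤)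
    (hfirm_inj : ∀ u : B ⊗[ℂ] B, LinearMap.mul' ℂ B u = 0 →
      u ∈ Submodule.span ℂ
        {z : B ⊗[ℂ] B | ∃ x y w : B, z = (x * y) ⊗ₜ[ℂ] w - x ⊗ₜ[ℂ] (y * w)})
    (hlp_s : ∀ F : Finset A, ∃ (n : ℕ) (υ : Fin n → (A →ₗ[ℂ] B)) (e : Fin n → (B →ₗ[ℂ] A)),
      (∀ (i : Fin n) (x : B) (a : A), υ i ((D.s x).L a) = x * υ i a) ∧
      (∀ (i : Fin n) (x x' : B), e i (x * x') = (D.s x).L (e i x')) ∧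
      ∀ a ∈ F, ∑ i, e i (υ i a) = a)
    (hlp_t : ∀ F : Finset A, ∃ (n : ℕ) (f : Fin n → (A →ₗ[ℂ] B)) (ω : Fin n → (B →ₗ[ℂ] A)),
      (∀ (i : Fin n) (x : B) (a : A), f i ((D.t x).L a) = f i a * x) ∧
      (∀ (i : Fin n) (x x' : B), ω i (x' * x) = (D.t x).L (ω i x')) ∧
      ∀ a ∈ F, ∑ i, ω i (f i a) = a) :
    (∀ u : A ⊗[ℂ] A, (∀ c : A, rmul₁ c u ∈ D.relB) → u ∈ D.relB) ∧
    (∀ u : A ⊗[ℂ] A, (∀ c : A, rmul₂ c u ∈ D.relB) → u ∈ D.relB) :=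
  stmt2_general D hfirm_inj hlp_s hlp_t

end LeftBgd
end
end

section
/- Assume the pair (T̃λ,T̃ρ) satisfies (L1), (L3) and (L4). Then the following two multiplicativity conditions are equivalent: (L5λ) whenever Σⱼuⱼ⊗vⱼ ∈ A⊗A represents T̃λ(a⊗c), one has T̃λ(a⊗bc)=Σⱼ T̃λ(uⱼ⊗b)·(1⊗vⱼ) for all a,b,c∈A; (L5ρ) whenever Σⱼuⱼ⊗vⱼ represents T̃ρ(b⊗c), one has T̃ρ(ab⊗c)=Σⱼ T̃ρ(a⊗vⱼ)·(uⱼ⊗1) for all a,b,c∈A. (In each condition the right-hand side is independent of the chosen representative.) -/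
open scoped TensorProduct

noncomputable section

/- Write `F_b(m ⊗ n) := T̃λ(m ⊗ b)·(1 ⊗ n)` and `G_a(m ⊗ n) := T̃ρ(a ⊗ n)·(m ⊗ 1)`, so that (L5λ)
reads `T̃λ(a ⊗ bc) ≡ F_b(T̃λ(a ⊗ c))` and (L5ρ) reads `T̃ρ(ab ⊗ c) ≡ G_a(T̃ρ(b ⊗ c))`. By (L1) both
maps descend to `A ⊗̄ A`, `F_b` commutes with right multiplication by `1 ⊗ A` and `G_a` with that
by `A ⊗ 1`, and by (L3) `F_b ≡ G_b`. Given (L5λ), multiply `T̃ρ(ab ⊗ c)` by `e ⊗ 1`: (L3) turns it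
into `T̃λ(e ⊗ ab)·(1 ⊗ c)`, (L5λ) into `F_a(T̃λ(e ⊗ b)·(1 ⊗ c))`, (L3) again into
`F_a(T̃ρ(b ⊗ c)·(e ⊗ 1)) ≡ G_a(T̃ρ(b ⊗ c))·(e ⊗ 1)`, and non-degeneracy (A3) cancels `e ⊗ 1`.
The converse is the mirror image. -/

section

variable {A : Type*} [NonUnitalRing A] [Module ℂ A] [IsScalarTower ℂ A A]

lemma rmul₁_tmul (c a b : A) : rmul₁ c (a ⊗ₜ[ℂ] b) = (a * c) ⊗ₜ[ℂ] b := rfl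

lemma rmul₂_tmul (c a b : A) : rmul₂ c (a ⊗ₜ[ℂ] b) = a ⊗ₜ[ℂ] (b * c) := rfl

lemma rmul₁_rmul₁ (c d : A) (w : A ⊗[ℂ] A) : rmul₁ c (rmul₁ d w) = rmul₁ (d * c) w := by
  induction w using TensorProduct.induction_on with
  | zero => simp
  | tmul x y => simp only [rmul₁_tmul, mul_assoc]
  | add w w' hw hw' => simp only [map_add, hw, hw']

lemma rmul₂_rmul₂ (c d : A) (w : A ⊗[ℂ] A) : rmul₂ c (rmul₂ d w) = rmul₂ (d * c) w := by
  induction w using TensorProduct.induction_on with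
  | zero => simp
  | tmul x y => simp only [rmul₂_tmul, mul_assoc]
  | add w w' hw hw' => simp only [map_add, hw, hw']

variable [SMulCommClass ℂ A A]

lemma Mult.rmul₁_map_R_id (T : Mult A) (c : A) (w : A ⊗[ℂ] A) :
    rmul₁ c (TensorProduct.map T.R LinearMap.id w) = rmul₁ (T.L c) w := by
  induction w using TensorProduct.induction_on with
  | zero => simp
  | tmul x y => simp [rmul₁_tmul, T.hC]
  | add w w' hw hw' => simp only [map_add, hw, hw']

lemma Mult.rmul₂_map_id_R (T : Mult A) (c : A) (w : A ⊗[ℂ] A) :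
    rmul₂ c (TensorProduct.map LinearMap.id T.R w) = rmul₂ (T.L c) w := by
  induction w using TensorProduct.induction_on with
  | zero => simp
  | tmul x y => simp [rmul₂_tmul, T.hC]
  | add w w' hw hw' => simp only [map_add, hw, hw']

lemma mulIn23_tmul (w : A ⊗[ℂ] A) (c : A) : mulIn23 (w ⊗ₜ[ℂ] c) = rmul₂ c w := by
  induction w using TensorProduct.induction_on with
  | zero => simp
  | tmul x y => simp [mulIn23, rmul₂_tmul]
  | add w w' hw hw' => simp only [TensorProduct.add_tmul, map_add, hw, hw']

lemma mulIn1_tmul (c : A) (w : A ⊗[ℂ] A) : mulIn1 (c ⊗ₜ[ℂ] w) = rmul₁ c w := by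
  induction w using TensorProduct.induction_on with
  | zero => simp
  | tmul x y => simp [mulIn1, rmul₁_tmul]
  | add w w' hw hw' => simp only [TensorProduct.tmul_add, map_add, hw, hw']

/-- `m ⊗ n ↦ T̃λ(m ⊗ b)·(1 ⊗ n)`, the right-hand side of (L5λ). -/
def substL (Tl : A ⊗[ℂ] A →ₗ[ℂ] A ⊗[ℂ] A) (b : A) : A ⊗[ℂ] A →ₗ[ℂ] A ⊗[ℂ] A :=
  mulIn23 ∘ₗ TensorProduct.map (Tl ∘ₗ tmulR b) LinearMap.id

/-- `m ⊗ n ↦ T̃ρ(a ⊗ n)·(m ⊗ 1)`, the right-hand side of (L5ρ). -/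
def substR (Tr : A ⊗[ℂ] A →ₗ[ℂ] A ⊗[ℂ] A) (a : A) : A ⊗[ℂ] A →ₗ[ℂ] A ⊗[ℂ] A :=
  mulIn1 ∘ₗ TensorProduct.map LinearMap.id (Tr ∘ₗ tmulL a)

lemma substL_tmul (Tl : A ⊗[ℂ] A →ₗ[ℂ] A ⊗[ℂ] A) (b m n : A) :
    substL Tl b (m ⊗ₜ[ℂ] n) = rmul₂ n (Tl (m ⊗ₜ[ℂ] b)) := by
  simp [substL, tmulR, mulIn23_tmul]

lemma substR_tmul (Tr : A ⊗[ℂ] A →ₗ[ℂ] A ⊗[ℂ] A) (a m n : A) :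
    substR Tr a (m ⊗ₜ[ℂ] n) = rmul₁ m (Tr (a ⊗ₜ[ℂ] n)) := by
  simp [substR, tmulL, mulIn1_tmul]

lemma substL_rmul₂ (Tl : A ⊗[ℂ] A →ₗ[ℂ] A ⊗[ℂ] A) (b c : A) (w : A ⊗[ℂ] A) :
    substL Tl b (rmul₂ c w) = rmul₂ c (substL Tl b w) := by
  induction w using TensorProduct.induction_on with
  | zero => simp
  | tmul m n => rw [rmul₂_tmul, substL_tmul, substL_tmul, rmul₂_rmul₂]
  | add w w' hw hw' => simp only [map_add, hw, hw']

lemma substR_rmul₁ (Tr : A ⊗[ℂ] A →ₗ[ℂ] A ⊗[ℂ] A) (a c : A) (w : A ⊗[ℂ] A) :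
    substR Tr a (rmul₁ c w) = rmul₁ c (substR Tr a w) := by
  induction w using TensorProduct.induction_on with
  | zero => simp
  | tmul m n => rw [rmul₁_tmul, substR_tmul, substR_tmul, rmul₁_rmul₁]
  | add w w' hw hw' => simp only [map_add, hw, hw']

end

section

variable {A B : Type*}
  [NonUnitalRing A] [Module ℂ A] [SMulCommClass ℂ A A] [IsScalarTower ℂ A A]
  [NonUnitalRing B] [Module ℂ B] [SMulCommClass ℂ B B] [IsScalarTower ℂ B B]

namespace BaseData

variable (D : BaseData A B)

lemma s_tmul_smodEq_tmul_t (x : B) (a b : A) :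
    (D.s x).L a ⊗ₜ[ℂ] b ≡ a ⊗ₜ[ℂ] (D.t x).L b [SMOD D.relB] :=
  SModEq.sub_mem.mpr (Submodule.subset_span ⟨x, a, b, rfl⟩)

variable {D}

lemma map_smodEq {f : A ⊗[ℂ] A →ₗ[ℂ] A ⊗[ℂ] A}
    (hf : ∀ (x : B) (a b : A),
      f ((D.s x).L a ⊗ₜ[ℂ] b) ≡ f (a ⊗ₜ[ℂ] (D.t x).L b) [SMOD D.relB])
    {u v : A ⊗[ℂ] A} (huv : u ≡ v [SMOD D.relB]) : f u ≡ f v [SMOD D.relB] := by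
  refine (huv.map f).mono (Submodule.map_le_iff_le_comap.mpr (Submodule.span_le.mpr ?_))
  rintro _ ⟨x, a, b, rfl⟩
  exact Submodule.mem_comap.mpr (by rw [map_sub]; exact SModEq.sub_mem.mp (hf x a b))

lemma rmul₁_smodEq (c : A) {u v : A ⊗[ℂ] A} (huv : u ≡ v [SMOD D.relB]) :
    rmul₁ c u ≡ rmul₁ c v [SMOD D.relB] :=
  map_smodEq (fun x a b => by
    simpa only [rmul₁_tmul, (D.s x).hL] using D.s_tmul_smodEq_tmul_t x (a * c) b) huv

lemma rmul₂_smodEq (c : A) {u v : A ⊗[ℂ] A} (huv : u ≡ v [SMOD D.relB]) :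
    rmul₂ c u ≡ rmul₂ c v [SMOD D.relB] :=
  map_smodEq (fun x a b => by
    simpa only [rmul₂_tmul, (D.t x).hL] using D.s_tmul_smodEq_tmul_t x a (b * c)) huv

lemma smodEq_of_forall_rmul₁ (hA3 : condA3 D) {u v : A ⊗[ℂ] A}
    (h : ∀ c : A, rmul₁ c u ≡ rmul₁ c v [SMOD D.relB]) : u ≡ v [SMOD D.relB] :=
  SModEq.sub_mem.mpr (hA3.1 _ fun c => by simpa only [map_sub] using SModEq.sub_mem.mp (h c))

lemma smodEq_of_forall_rmul₂ (hA3 : condA3 D) {u v : A ⊗[ℂ] A}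
    (h : ∀ c : A, rmul₂ c u ≡ rmul₂ c v [SMOD D.relB]) : u ≡ v [SMOD D.relB] :=
  SModEq.sub_mem.mpr (hA3.2 _ fun c => by simpa only [map_sub] using SModEq.sub_mem.mp (h c))

lemma substL_smodEq {Tl : A ⊗[ℂ] A →ₗ[ℂ] A ⊗[ℂ] A}
    (hTl : ∀ (x : B) (a b : A),
      Tl ((D.s x).L a ⊗ₜ[ℂ] b) -
        TensorProduct.map LinearMap.id (D.t x).R (Tl (a ⊗ₜ[ℂ] b)) ∈ D.relB)
    (b : A) {u v : A ⊗[ℂ] A} (huv : u ≡ v [SMOD D.relB]) :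
    substL Tl b u ≡ substL Tl b v [SMOD D.relB] :=
  map_smodEq (fun x p q => by
    simpa only [substL_tmul, Mult.rmul₂_map_id_R]
      using rmul₂_smodEq q (SModEq.sub_mem.mpr (hTl x p b))) huv

lemma substR_smodEq {Tr : A ⊗[ℂ] A →ₗ[ℂ] A ⊗[ℂ] A}
    (hTr : ∀ (y : B) (a b : A),
      Tr (a ⊗ₜ[ℂ] (D.t y).L b) -
        TensorProduct.map (D.s y).R LinearMap.id (Tr (a ⊗ₜ[ℂ] b)) ∈ D.relB)
    (a : A) {u v : A ⊗[ℂ] A} (huv : u ≡ v [SMOD D.relB]) :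
    substR Tr a u ≡ substR Tr a v [SMOD D.relB] :=
  map_smodEq (fun x p q => by
    simpa only [substR_tmul, Mult.rmul₁_map_R_id]
      using (rmul₁_smodEq p (SModEq.sub_mem.mpr (hTr x a q))).symm) huv

lemma _root_.condL3.smodEq {Tl Tr : A ⊗[ℂ] A →ₗ[ℂ] A ⊗[ℂ] A} (h3 : condL3 D Tl Tr)
    (a b c : A) : rmul₂ c (Tl (a ⊗ₜ[ℂ] b)) ≡ rmul₁ a (Tr (b ⊗ₜ[ℂ] c)) [SMOD D.relB] :=
  SModEq.sub_mem.mpr (h3 a b c)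

lemma substL_smodEq_substR {Tl Tr : A ⊗[ℂ] A →ₗ[ℂ] A ⊗[ℂ] A} (h3 : condL3 D Tl Tr)
    (b : A) (w : A ⊗[ℂ] A) : substL Tl b w ≡ substR Tr b w [SMOD D.relB] := by
  induction w using TensorProduct.induction_on with
  | zero => simp only [map_zero, SModEq.rfl]
  | tmul m n => rw [substL_tmul, substR_tmul]; exact h3.smodEq m b n
  | add w w' hw hw' => simpa only [map_add] using hw.add hw'

end BaseData

open BaseData

lemma condL5rho_of_condL5lam {D : BaseData A B} (hA3 : condA3 D)
    {Tl Tr : A ⊗[ℂ] A →ₗ[ℂ] A ⊗[ℂ] A} (h1 : condL1 D Tl Tr) (h3 : condL3 D Tl Tr)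
    (h5 : condL5lam D Tl) : condL5rho D Tr := by
  intro a b c u hu
  refine SModEq.sub_mem.mp (smodEq_of_forall_rmul₁ hA3 fun e => ?_)
  calc rmul₁ e (Tr ((a * b) ⊗ₜ[ℂ] c))
      ≡ rmul₂ c (Tl (e ⊗ₜ[ℂ] (a * b))) [SMOD D.relB] := (h3.smodEq e (a * b) c).symm
    _ ≡ rmul₂ c (substL Tl a (Tl (e ⊗ₜ[ℂ] b))) [SMOD D.relB] :=
        rmul₂_smodEq c (SModEq.sub_mem.mpr (h5 e a b _ (by simp)))
    _ = substL Tl a (rmul₂ c (Tl (e ⊗ₜ[ℂ] b))) := (substL_rmul₂ Tl a c _).symm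
    _ ≡ substL Tl a (rmul₁ e (Tr (b ⊗ₜ[ℂ] c))) [SMOD D.relB] :=
        substL_smodEq h1.1 a (h3.smodEq e b c)
    _ ≡ substL Tl a (rmul₁ e u) [SMOD D.relB] :=
        substL_smodEq h1.1 a (rmul₁_smodEq e (SModEq.sub_mem.mpr hu).symm)
    _ ≡ substR Tr a (rmul₁ e u) [SMOD D.relB] := substL_smodEq_substR h3 a _
    _ = rmul₁ e (substR Tr a u) := substR_rmul₁ Tr a e u

lemma condL5lam_of_condL5rho {D : BaseData A B} (hA3 : condA3 D)
    {Tl Tr : A ⊗[ℂ] A →ₗ[ℂ] A ⊗[ℂ] A} (h1 : condL1 D Tl Tr) (h3 : condL3 D Tl Tr)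
    (h5 : condL5rho D Tr) : condL5lam D Tl := by
  intro a b c u hu
  refine SModEq.sub_mem.mp (smodEq_of_forall_rmul₂ hA3 fun e => ?_)
  calc rmul₂ e (Tl (a ⊗ₜ[ℂ] (b * c)))
      ≡ rmul₁ a (Tr ((b * c) ⊗ₜ[ℂ] e)) [SMOD D.relB] := h3.smodEq a (b * c) e
    _ ≡ rmul₁ a (substR Tr b (Tr (c ⊗ₜ[ℂ] e))) [SMOD D.relB] :=
        rmul₁_smodEq a (SModEq.sub_mem.mpr (h5 b c e _ (by simp)))
    _ = substR Tr b (rmul₁ a (Tr (c ⊗ₜ[ℂ] e))) := (substR_rmul₁ Tr b a _).symm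
    _ ≡ substR Tr b (rmul₂ e (Tl (a ⊗ₜ[ℂ] c))) [SMOD D.relB] :=
        substR_smodEq h1.2 b (h3.smodEq a c e).symm
    _ ≡ substR Tr b (rmul₂ e u) [SMOD D.relB] :=
        substR_smodEq h1.2 b (rmul₂_smodEq e (SModEq.sub_mem.mpr hu).symm)
    _ ≡ substL Tl b (rmul₂ e u) [SMOD D.relB] := (substL_smodEq_substR h3 b _).symm
    _ = rmul₂ e (substL Tl b u) := substL_rmul₂ Tl b e u

theorem stmt3_general (D : BaseData A B) (hA3 : condA3 D)
    (Tl Tr : A ⊗[ℂ] A →ₗ[ℂ] A ⊗[ℂ] A)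
    (h1 : condL1 D Tl Tr) (h3 : condL3 D Tl Tr) :
    condL5lam D Tl ↔ condL5rho D Tr :=
  ⟨condL5rho_of_condL5lam hA3 h1 h3, condL5lam_of_condL5rho hA3 h1 h3⟩

/-- given (L1), (L3), (L4), the multiplicativity conditions (L5λ) and (L5ρ)
are equivalent. -/
theorem stmt3 (D : BaseData A B) (hA3 : condA3 D)
    (Tl Tr : A ⊗[ℂ] A →ₗ[ℂ] A ⊗[ℂ] A)
    (h1 : condL1 D Tl Tr) (h3 : condL3 D Tl Tr) (h4 : condL4 D Tl Tr) :
    condL5lam D Tl ↔ condL5rho D Tr :=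
  stmt3_general D hA3 Tl Tr h1 h3

end
end
end

section
/- If the left multiplier bialgebroid is left-full, i.e. A is spanned by the elements Σⱼ s(ψ(vⱼ))uⱼ where a,b∈A, ψ:A→B is linear with ψ(t(x)a′)=ψ(a′)x for all x∈B,a′∈A, and Σⱼuⱼ⊗vⱼ∈A⊗A represents T̃ρ(a⊗b), or right-full, i.e. A is spanned by the elements Σⱼ t(φ(uⱼ))vⱼ where φ:A→B is linear with φ(s(x)a′)=xφ(a′) and Σⱼuⱼ⊗vⱼ represents T̃λ(a⊗b), then there exists at most one left counit ε:A→B. -/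
open scoped TensorProduct

noncomputable section

section LeftBgd

variable {A B : Type*}
  [NonUnitalRing A] [Module ℂ A] [SMulCommClass ℂ A A] [IsScalarTower ℂ A A]
  [NonUnitalRing B] [Module ℂ B] [SMulCommClass ℂ B B] [IsScalarTower ℂ B B]

section Uniqueness

variable {D : BaseData A B} {Tl Tr : A ⊗[ℂ] A →ₗ[ℂ] A ⊗[ℂ] A} {ε : A →ₗ[ℂ] B}

theorem IsLeftCounit.apply_sum_s_eq (hε : IsLeftCounit D Tl Tr ε) {ψ : A →ₗ[ℂ] B}
    (hψ : ∀ (x : B) (a : A), ψ ((D.t x).L a) = ψ a * x) {a b : A} {n : ℕ} {uu vv : Fin n → A}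
    (hrep : (∑ j, uu j ⊗ₜ[ℂ] vv j) - Tr (a ⊗ₜ[ℂ] b) ∈ D.relB) :
    ε (∑ j, (D.s (ψ (vv j))).L (uu j)) = ψ (a * b) := by
  calc ε (∑ j, (D.s (ψ (vv j))).L (uu j))
      = ψ (∑ j, (D.t (ε (uu j))).L (vv j)) := by
        simp only [map_sum, hε.1, hψ]
    _ = ψ (a * b) := by rw [hε.2.2.1 a b n uu vv hrep]

theorem IsLeftCounit.apply_sum_t_eq (hε : IsLeftCounit D Tl Tr ε) {φ : A →ₗ[ℂ] B}
    (hφ : ∀ (x : B) (a : A), φ ((D.s x).L a) = x * φ a) {a b : A} {n : ℕ} {uu vv : Fin n → A}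
    (hrep : (∑ j, uu j ⊗ₜ[ℂ] vv j) - Tl (a ⊗ₜ[ℂ] b) ∈ D.relB) :
    ε (∑ j, (D.t (φ (uu j))).L (vv j)) = φ (a * b) := by
  calc ε (∑ j, (D.t (φ (uu j))).L (vv j))
      = φ (∑ j, (D.s (ε (vv j))).L (uu j)) := by
        simp only [map_sum, hε.2.1, hφ]
    _ = φ (a * b) := by rw [hε.2.2.2 a b n uu vv hrep]

theorem IsLeftCounit.eqOn_leftFullSet {ε' : A →ₗ[ℂ] B} (hε : IsLeftCounit D Tl Tr ε)
    (hε' : IsLeftCounit D Tl Tr ε') : Set.EqOn ε ε' (leftFullSet D Tr) := by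
  rintro _ ⟨ψ, hψ, a, b, n, uu, vv, hrep, rfl⟩
  rw [hε.apply_sum_s_eq hψ hrep, hε'.apply_sum_s_eq hψ hrep]

theorem IsLeftCounit.eqOn_rightFullSet {ε' : A →ₗ[ℂ] B} (hε : IsLeftCounit D Tl Tr ε)
    (hε' : IsLeftCounit D Tl Tr ε') : Set.EqOn ε ε' (rightFullSet D Tl) := by
  rintro _ ⟨φ, hφ, a, b, n, uu, vv, hrep, rfl⟩
  rw [hε.apply_sum_t_eq hφ hrep, hε'.apply_sum_t_eq hφ hrep]

end Uniqueness

theorem stmt6_general (D : BaseData A B) (Tl Tr : A ⊗[ℂ] A →ₗ[ℂ] A ⊗[ℂ] A)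
    (hfull : Submodule.span ℂ (leftFullSet D Tr) = ⊤ ∨
      Submodule.span ℂ (rightFullSet D Tl) = ⊤) :
    ∀ ε₁ ε₂ : A →ₗ[ℂ] B, IsLeftCounit D Tl Tr ε₁ → IsLeftCounit D Tl Tr ε₂ → ε₁ = ε₂ := by
  intro ε₁ ε₂ h₁ h₂
  rcases hfull with hspan | hspan
  · exact LinearMap.ext_on hspan (h₁.eqOn_leftFullSet h₂)
  · exact LinearMap.ext_on hspan (h₁.eqOn_rightFullSet h₂)

/-- a left-full or right-full left multiplier bialgebroid has at most one
left counit. -/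
theorem stmt6 (D : BaseData A B) (Tl Tr : A ⊗[ℂ] A →ₗ[ℂ] A ⊗[ℂ] A)
    (h : IsLeftBialgebroid D Tl Tr)
    (hfull : Submodule.span ℂ (leftFullSet D Tr) = ⊤ ∨
      Submodule.span ℂ (rightFullSet D Tl) = ⊤) :
    ∀ ε₁ ε₂ : A →ₗ[ℂ] B, IsLeftCounit D Tl Tr ε₁ → IsLeftCounit D Tl Tr ε₂ → ε₁ = ε₂ :=
  stmt6_general D Tl Tr hfull

end LeftBgd
end
end

section
/- Let ε be a left counit and set B₀:=ε(A). Then B₀ is a two-sided ideal of B, B₀ equals the linear span of B₀·B₀, the spans of s(B₀)A and t(B₀)A equal A, and B₀ is an essential ideal: if x∈B and xB₀=0 then x=0, and if B₀x=0 then x=0. -/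
open scoped TensorProduct

noncomputable section

section LeftBgd

variable {A B : Type*}
  [NonUnitalRing A] [Module ℂ A] [SMulCommClass ℂ A A] [IsScalarTower ℂ A A]
  [NonUnitalRing B] [Module ℂ B] [SMulCommClass ℂ B B] [IsScalarTower ℂ B B]

/-!
The counit identities write each product `a * b` both as `Σⱼ s(ε vⱼ) uⱼ` (representing
`T̃λ(a ⊗ b)`) and as `Σⱼ t(ε uⱼ) vⱼ` (representing `T̃ρ(a ⊗ b)`); since `A` is idempotent,
`s(B₀)A` and `t(B₀)A` span `A`. Then `ε (t(y) a) = ε a * y` makes `B₀` idempotent, and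
faithfulness of `s` and `t` makes it essential: if `x B₀ = 0` then `s(x)` kills `s(B₀)A = A`.
-/

theorem TensorProduct.exists_eq_sum_fin_tmul {R M N : Type*} [CommSemiring R]
    [AddCommMonoid M] [AddCommMonoid N] [Module R M] [Module R N] (w : M ⊗[R] N) :
    ∃ (n : ℕ) (uu : Fin n → M) (vv : Fin n → N), w = ∑ j, uu j ⊗ₜ[R] vv j := by
  obtain ⟨S, hS⟩ := TensorProduct.exists_finset w
  refine ⟨S.card, fun j => (S.equivFin.symm j : M × N).1,
    fun j => (S.equivFin.symm j : M × N).2, ?_⟩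
  rw [hS, ← Finset.sum_attach S (fun i => i.1 ⊗ₜ[R] i.2)]
  exact (Equiv.sum_comp S.equivFin.symm _).symm

namespace BaseData

theorem eq_top_of_forall_mul_mem (D : BaseData A B) (p : Submodule ℂ A)
    (hp : ∀ a b : A, a * b ∈ p) : p = ⊤ := by
  rw [eq_top_iff, ← D.A_idem, Submodule.span_le]
  rintro _ ⟨a, b, rfl⟩
  exact hp a b

variable (D : BaseData A B)

theorem s_zero_L_s8 : (D.s 0).L = 0 := by
  rw [← zero_smul ℂ (0 : B), D.s_smul]
  exact zero_smul ℂ _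

theorem t_zero_L_s8 : (D.t 0).L = 0 := by
  rw [← zero_smul ℂ (0 : B), D.t_smul]
  exact zero_smul ℂ _

theorem s_mul_L_apply (x y : B) (a : A) : (D.s (x * y)).L a = (D.s x).L ((D.s y).L a) := by
  rw [D.s_mul]
  rfl

theorem t_mul_L_apply (x y : B) (a : A) : (D.t (x * y)).L a = (D.t y).L ((D.t x).L a) := by
  rw [D.t_mul]
  rfl

end BaseData

namespace IsLeftCounit

variable {D : BaseData A B} {Tl Tr : A ⊗[ℂ] A →ₗ[ℂ] A ⊗[ℂ] A} {ε : A →ₗ[ℂ] B}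

theorem mul_mem_range (hε : IsLeftCounit D Tl Tr ε) {b : B} (hb : b ∈ LinearMap.range ε)
    (x : B) : x * b ∈ LinearMap.range ε ∧ b * x ∈ LinearMap.range ε := by
  obtain ⟨a, rfl⟩ := hb
  exact ⟨⟨(D.s x).L a, hε.1 x a⟩, ⟨(D.t x).L a, hε.2.1 x a⟩⟩

theorem mul_mem_span_s (hε : IsLeftCounit D Tl Tr ε) (a b : A) :
    a * b ∈ Submodule.span ℂ
      {z : A | ∃ (x : B) (c : A), x ∈ LinearMap.range ε ∧ z = (D.s x).L c} := by
  obtain ⟨n, uu, vv, hrep⟩ := TensorProduct.exists_eq_sum_fin_tmul (Tl (a ⊗ₜ[ℂ] b))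
  rw [← hε.2.2.2 a b n uu vv (by rw [hrep, sub_self]; exact zero_mem _)]
  exact Submodule.sum_mem _ fun j _ => Submodule.subset_span ⟨_, uu j, ⟨vv j, rfl⟩, rfl⟩

theorem mul_mem_span_t (hε : IsLeftCounit D Tl Tr ε) (a b : A) :
    a * b ∈ Submodule.span ℂ
      {z : A | ∃ (x : B) (c : A), x ∈ LinearMap.range ε ∧ z = (D.t x).L c} := by
  obtain ⟨n, uu, vv, hrep⟩ := TensorProduct.exists_eq_sum_fin_tmul (Tr (a ⊗ₜ[ℂ] b))
  rw [← hε.2.2.1 a b n uu vv (by rw [hrep, sub_self]; exact zero_mem _)]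
  exact Submodule.sum_mem _ fun j _ => Submodule.subset_span ⟨_, vv j, ⟨uu j, rfl⟩, rfl⟩

theorem span_s_eq_top (hε : IsLeftCounit D Tl Tr ε) :
    Submodule.span ℂ
      {z : A | ∃ (x : B) (c : A), x ∈ LinearMap.range ε ∧ z = (D.s x).L c} = ⊤ :=
  D.eq_top_of_forall_mul_mem _ hε.mul_mem_span_s

theorem span_t_eq_top (hε : IsLeftCounit D Tl Tr ε) :
    Submodule.span ℂ
      {z : A | ∃ (x : B) (c : A), x ∈ LinearMap.range ε ∧ z = (D.t x).L c} = ⊤ :=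
  D.eq_top_of_forall_mul_mem _ hε.mul_mem_span_t

theorem range_eq_span_mul (hε : IsLeftCounit D Tl Tr ε) :
    LinearMap.range ε = Submodule.span ℂ
      {z : B | ∃ b c : B, b ∈ LinearMap.range ε ∧ c ∈ LinearMap.range ε ∧ z = b * c} := by
  apply le_antisymm
  · refine (LinearMap.range_eq_map ε).le.trans ?_
    rw [← hε.span_t_eq_top, Submodule.map_span, Submodule.span_le]
    rintro _ ⟨_, ⟨y, c, hy, rfl⟩, rfl⟩
    exact Submodule.subset_span ⟨ε c, y, ⟨c, rfl⟩, hy, hε.2.1 y c⟩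
  · rw [Submodule.span_le]
    rintro _ ⟨b, c, hb, -, rfl⟩
    exact (hε.mul_mem_range hb c).2

theorem eq_zero_of_mul_range_eq_zero (hε : IsLeftCounit D Tl Tr ε) {x : B}
    (hx : ∀ b ∈ LinearMap.range ε, x * b = 0) : x = 0 := by
  refine D.s_faithful x fun a => ?_
  suffices LinearMap.ker (D.s x).L = ⊤ from LinearMap.congr_fun (LinearMap.ker_eq_top.1 this) a
  rw [eq_top_iff, ← hε.span_s_eq_top, Submodule.span_le]
  rintro _ ⟨y, c, hy, rfl⟩
  rw [SetLike.mem_coe, LinearMap.mem_ker, ← D.s_mul_L_apply, hx y hy, D.s_zero_L_s8,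
    LinearMap.zero_apply]

theorem eq_zero_of_range_mul_eq_zero (hε : IsLeftCounit D Tl Tr ε) {x : B}
    (hx : ∀ b ∈ LinearMap.range ε, b * x = 0) : x = 0 := by
  refine D.t_faithful x fun a => ?_
  suffices LinearMap.ker (D.t x).L = ⊤ from LinearMap.congr_fun (LinearMap.ker_eq_top.1 this) a
  rw [eq_top_iff, ← hε.span_t_eq_top, Submodule.span_le]
  rintro _ ⟨y, c, hy, rfl⟩
  rw [SetLike.mem_coe, LinearMap.mem_ker, ← D.t_mul_L_apply, hx y hy, D.t_zero_L_s8,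
    LinearMap.zero_apply]

end IsLeftCounit

theorem stmt8_general (D : BaseData A B) (Tl Tr : A ⊗[ℂ] A →ₗ[ℂ] A ⊗[ℂ] A)
    (ε : A →ₗ[ℂ] B) (hε : IsLeftCounit D Tl Tr ε) :
    (∀ x : B, ∀ b ∈ LinearMap.range ε, x * b ∈ LinearMap.range ε ∧
      b * x ∈ LinearMap.range ε) ∧
    (LinearMap.range ε = Submodule.span ℂ
      {z : B | ∃ b c : B, b ∈ LinearMap.range ε ∧ c ∈ LinearMap.range ε ∧ z = b * c}) ∧
    Submodule.span ℂ {z : A | ∃ (x : B) (a : A),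
      x ∈ LinearMap.range ε ∧ z = (D.s x).L a} = ⊤ ∧
    Submodule.span ℂ {z : A | ∃ (x : B) (a : A),
      x ∈ LinearMap.range ε ∧ z = (D.t x).L a} = ⊤ ∧
    (∀ x : B, (∀ b ∈ LinearMap.range ε, x * b = 0) → x = 0) ∧
    (∀ x : B, (∀ b ∈ LinearMap.range ε, b * x = 0) → x = 0) :=
  ⟨fun x _ hb => hε.mul_mem_range hb x, hε.range_eq_span_mul, hε.span_s_eq_top,
    hε.span_t_eq_top, fun _ => hε.eq_zero_of_mul_range_eq_zero,
    fun _ => hε.eq_zero_of_range_mul_eq_zero⟩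

/-- the image `B₀ = ε(A)` of a left counit is an idempotent, essential
two-sided ideal of `B` with `s(B₀)A = A = t(B₀)A`. -/
theorem stmt8 (D : BaseData A B) (Tl Tr : A ⊗[ℂ] A →ₗ[ℂ] A ⊗[ℂ] A)
    (h : IsLeftBialgebroid D Tl Tr)
    (ε : A →ₗ[ℂ] B) (hε : IsLeftCounit D Tl Tr ε) :
    (∀ x : B, ∀ b ∈ LinearMap.range ε, x * b ∈ LinearMap.range ε ∧
      b * x ∈ LinearMap.range ε) ∧
    (LinearMap.range ε = Submodule.span ℂ
      {z : B | ∃ b c : B, b ∈ LinearMap.range ε ∧ c ∈ LinearMap.range ε ∧ z = b * c}) ∧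
    Submodule.span ℂ {z : A | ∃ (x : B) (a : A),
      x ∈ LinearMap.range ε ∧ z = (D.s x).L a} = ⊤ ∧
    Submodule.span ℂ {z : A | ∃ (x : B) (a : A),
      x ∈ LinearMap.range ε ∧ z = (D.t x).L a} = ⊤ ∧
    (∀ x : B, (∀ b ∈ LinearMap.range ε, x * b = 0) → x = 0) ∧
    (∀ x : B, (∀ b ∈ LinearMap.range ε, b * x = 0) → x = 0) :=
  stmt8_general D Tl Tr ε hε

end LeftBgd
end
end
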